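/- Let F be a field of characteristic zero, A = F[x,y], n > 1, and d¹(a) = (y^n · ∂a/∂y, −y^{n-1}·∂a/∂x). Then the image of d¹ intersects the subspace ⊕_{i=0}^{n-2} y^i F[x] × {0} ⊆ A × A trivially: if d¹(a) = (p, 0) with p a polynomial of y-degree at most n−2, then p = 0. -/
import Mathlib

open MvPolynomial

noncomputable section

lemma le_degreeOf_X_pow_mul {F : Type*} [Field F] (j : Fin 2) (n : ℕ)
    {f : MvPolynomial (Fin 2) F} (hf : f ≠ 0) :
    n ≤ degreeOf j (X j ^ n * f) := by
  induction n with
  | zero => simp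
  | succ n ih =>
    have h1 : X j ^ (n + 1) * f = (X j ^ n * f) * X j := by ring
    have h2 : (X j ^ n * f : MvPolynomial (Fin 2) F) ≠ 0 :=
      mul_ne_zero (pow_ne_zero _ (X_ne_zero j)) hf
    rw [h1, (degreeOf_mul_X_eq_degreeOf_add_one_iff j _).2 h2]
    omega

/-- `d¹(a) = (y^n · ∂a/∂y, −y^{n-1} · ∂a/∂x)`. -/
def d1 (F : Type*) [Field F] (n : ℕ) (a : MvPolynomial (Fin 2) F) :
    MvPolynomial (Fin 2) F × MvPolynomial (Fin 2) F :=
  (X 1 ^ n * pderiv 1 a, -(X 1 ^ (n - 1) * pderiv 0 a))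

/-- The image of `d¹` meets `(⊕_{i=0}^{n-2} y^i F[x]) × {0}` trivially: if
`d¹(a) = (p, 0)` with `p` of `y`-degree at most `n−2`, then `p = 0`. -/
theorem stmt5 (F : Type*) [Field F] [CharZero F] (n : ℕ) (hn : 1 < n)
    (a p : MvPolynomial (Fin 2) F) (h : d1 F n a = (p, 0))
    (hp : degreeOf 1 p ≤ n - 2) : p = 0 := by
  have h1 : X 1 ^ n * pderiv 1 a = p := congrArg Prod.fst h
  by_cases hq : pderiv 1 a = 0
  · rw [← h1, hq, mul_zero]
  · have := le_degreeOf_X_pow_mul 1 n hq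
    rw [h1] at this
    omega
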